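/- Let g : ℝ^k → ℝ be Lipschitz and differentiable at a point x. Let η > 0 and set x' = x - η∇g(x). Suppose there exists c < 1 such that for almost every point v on the line segment between x and x', g is differentiable at v and ‖∇g(x) - ∇g(v)‖₂ ≤ c‖∇g(x)‖₂. Then g(x') - g(x) ≤ -η(1-c)‖∇g(x)‖₂². -/

import Mathlib

open MeasureTheory Set Filter

/-- If `f : ℝ → ℝ` is Lipschitz and for a.e. `t ∈ [0,1]` it has a derivative `≤ B`,
then `f 1 - f 0 ≤ B`. -/
theorem lipschitz_sub_le_of_ae_deriv_le {f : ℝ → ℝ} {K : NNReal} (hf : LipschitzWith K f)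
    {B : ℝ} (h : ∀ᵐ t ∂(volume : Measure ℝ), t ∈ Icc (0:ℝ) 1 → ∃ d, HasDerivAt f d t ∧ d ≤ B) :
    f 1 - f 0 ≤ B := by
  have hcont : Continuous f := hf.continuous
  refine le_of_forall_pos_le_add fun ε hε => ?_
  set ψ : ℝ → ℝ := fun t => f t - (B + ε) * t with hψdef
  have hψlip : LipschitzWith (K + ‖B + ε‖₊) ψ := by
    have h1 : LipschitzWith ‖B + ε‖₊ (fun t : ℝ => (B + ε) * t) := by
      apply LipschitzWith.of_dist_le_mul
      intro a b
      simp [Real.dist_eq, ← mul_sub, abs_mul]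
    exact hf.sub h1
  have hψcont : Continuous ψ := hψlip.continuous
  -- the bad set
  set N : Set ℝ := {t | t ∈ Icc (0:ℝ) 1 ∧ ¬ ∃ d, HasDerivAt f d t ∧ d ≤ B} with hNdef
  have hN : volume N = 0 := by
    rw [ae_iff] at h
    have : N = {t | ¬ (t ∈ Icc (0:ℝ) 1 → ∃ d, HasDerivAt f d t ∧ d ≤ B)} := by
      ext t; simp [hNdef, Classical.not_imp, and_assoc]
    rw [this]; exact h
  by_contra hlt
  push_neg at hlt
  have hψ01 : ψ 0 < ψ 1 := by simp only [hψdef]; ring_nf; linarith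
  -- claim: Ioo (ψ 0) (ψ 1) ⊆ ψ '' N
  have hsub : Ioo (ψ 0) (ψ 1) ⊆ ψ '' N := by
    intro y hy
    set S : Set ℝ := Icc (0:ℝ) 1 ∩ ψ ⁻¹' {y} with hSdef
    have hScomp : IsCompact S :=
      (isCompact_Icc.inter_right (isClosed_singleton.preimage hψcont))
    have hSne : S.Nonempty := by
      obtain ⟨t, ht, hψt⟩ := intermediate_value_Icc (by norm_num : (0:ℝ) ≤ 1)
        hψcont.continuousOn (mem_Icc.2 ⟨hy.1.le, hy.2.le⟩)
      exact ⟨t, ht, hψt⟩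
    set t := sSup S with htdef
    have htS : t ∈ S := hScomp.sSup_mem hSne
    have ht01 : t ∈ Icc (0:ℝ) 1 := htS.1
    have hψt : ψ t = y := htS.2
    have ht1 : t < 1 := lt_of_le_of_ne ht01.2 (fun h1 => by rw [h1] at hψt; rw [hψt] at hy; exact lt_irrefl _ hy.2)
    -- for s ∈ (t, 1], ψ s > y
    have hgt : ∀ s ∈ Ioc t 1, y < ψ s := by
      intro s hs
      by_contra hle
      push_neg at hle
      rcases eq_or_lt_of_le hle with heq | hltψ
      · have : s ∈ S := ⟨⟨le_trans ht01.1 hs.1.le, hs.2⟩, heq⟩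
        exact absurd (le_csSup hScomp.bddAbove this) (not_le.2 hs.1)
      · obtain ⟨s', hs', hψs'⟩ := intermediate_value_Icc hs.2
          hψcont.continuousOn (mem_Icc.2 ⟨hltψ.le, hy.2.le⟩)
        have : s' ∈ S := ⟨⟨le_trans (le_trans ht01.1 hs.1.le) hs'.1, hs'.2⟩, hψs'⟩
        have := le_csSup hScomp.bddAbove this
        linarith [hs'.1, hs.1]
    -- t ∈ N
    have htN : t ∈ N := by
      refine ⟨ht01, fun hd => ?_⟩
      obtain ⟨d, hdd, hdB⟩ := hd
      have hψd : HasDerivAt ψ (d - (B + ε)) t := by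
        have := hdd.sub (((hasDerivAt_id t).const_mul (B + ε)))
        simp only [id, mul_one] at this
        exact this
      have hψd' : HasDerivWithinAt ψ (d - (B + ε)) (Ioi t) t := hψd.hasDerivWithinAt
      rw [hasDerivWithinAt_iff_tendsto_slope] at hψd'
      have hIoi : Ioi t \ {t} = Ioi t := diff_singleton_eq_self (by simp)
      rw [hIoi] at hψd'
      have hnn : ∀ᶠ s in nhdsWithin t (Ioi t), 0 ≤ slope ψ t s := by
        filter_upwards [Ioc_mem_nhdsGT_of_mem ⟨le_refl t, ht1⟩] with s hs
        have h1 : y < ψ s := hgt s hs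
        have h2 : t < s := hs.1
        rw [slope_def_field]
        rw [div_nonneg_iff]
        left
        constructor
        · rw [hψt] at *; linarith
        · linarith
      have : (0:ℝ) ≤ d - (B + ε) := ge_of_tendsto hψd' hnn
      linarith
    exact ⟨t, htN, hψt⟩
  -- measure contradiction
  have himg : volume (ψ '' N) = 0 := by
    have h1 := hψlip.hausdorffMeasure_image_le (d := 1) zero_le_one N
    rw [MeasureTheory.hausdorffMeasure_real, hN, mul_zero] at h1
    exact le_antisymm h1 (by simp)
  have h2 : volume (Ioo (ψ 0) (ψ 1)) ≤ volume (ψ '' N) := measure_mono hsub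
  rw [himg, Real.volume_Ioo] at h2
  simp only [nonpos_iff_eq_zero, ENNReal.ofReal_eq_zero] at h2
  linarith

/-- Lemma 3.1: progress of a gradient step for a Lipschitz function whose
gradient varies little (relative to its norm) along the step segment. -/
theorem gradient_step_progress {k : ℕ} (g : EuclideanSpace ℝ (Fin k) → ℝ)
    (K : NNReal) (hLip : LipschitzWith K g)
    (x : EuclideanSpace ℝ (Fin k)) (hdiff : DifferentiableAt ℝ g x)
    (η : ℝ) (hη : 0 < η)
    (x' : EuclideanSpace ℝ (Fin k)) (hx' : x' = x - η • gradient g x)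
    (c : ℝ) (hc : c < 1)
    (hseg : ∀ᵐ t ∂(volume.restrict (Set.Icc (0:ℝ) 1)),
      DifferentiableAt ℝ g (x + t • (x' - x)) ∧
      ‖gradient g x - gradient g (x + t • (x' - x))‖ ≤ c * ‖gradient g x‖) :
    g x' - g x ≤ -η * (1 - c) * ‖gradient g x‖ ^ 2 := by
  set v : EuclideanSpace ℝ (Fin k) := x' - x with hv
  set φ : ℝ → ℝ := fun t => g (x + t • v) with hφ
  have hline : LipschitzWith ‖v‖₊ (fun t : ℝ => x + t • v) := by
    apply LipschitzWith.of_dist_le_mul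
    intro a b
    simp only [dist_eq_norm]
    rw [show (x + a • v) - (x + b • v) = (a - b) • v by module]
    rw [norm_smul, mul_comm, coe_nnnorm]
  have hφlip : LipschitzWith (K * ‖v‖₊) φ := hLip.comp hline
  set B : ℝ := -η * (1 - c) * ‖gradient g x‖ ^ 2 with hB
  have hae : ∀ᵐ t ∂(volume : Measure ℝ), t ∈ Set.Icc (0:ℝ) 1 →
      ∃ d, HasDerivAt φ d t ∧ d ≤ B := by
    have h1 := (ae_restrict_iff' measurableSet_Icc).mp hseg
    filter_upwards [h1] with t ht hmem
    obtain ⟨hd, hnorm⟩ := ht hmem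
    set w : EuclideanSpace ℝ (Fin k) := x + t • v with hw
    have hgrad : HasGradientAt g (gradient g w) w := hd.hasGradientAt
    have hF : HasFDerivAt g ((InnerProductSpace.toDual ℝ _) (gradient g w)) w :=
      hasGradientAt_iff_hasFDerivAt.mp hgrad
    have hℓ : HasDerivAt (fun s : ℝ => x + s • v) v t := by
      simpa using ((hasDerivAt_id t).smul_const v).const_add x
    have hcomp := hF.comp_hasDerivAt t hℓ
    refine ⟨_, hcomp, ?_⟩
    have hval : (InnerProductSpace.toDual ℝ _) (gradient g w) v =
        (inner ℝ (gradient g w) v : ℝ) := rfl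
    rw [hval]
    have hvval : v = -η • gradient g x := by rw [hv, hx']; module
    rw [hvval]
    rw [real_inner_smul_right]
    have hsplit : (inner ℝ (gradient g w) (gradient g x) : ℝ) =
        (inner ℝ (gradient g x) (gradient g x) : ℝ)
          - (inner ℝ (gradient g x - gradient g w) (gradient g x) : ℝ) := by
      rw [inner_sub_left]; ring
    rw [hsplit, real_inner_self_eq_norm_sq]
    have hCS : (inner ℝ (gradient g x - gradient g w) (gradient g x) : ℝ)
        ≤ c * ‖gradient g x‖ * ‖gradient g x‖ := by
      calc (inner ℝ (gradient g x - gradient g w) (gradient g x) : ℝ)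
          ≤ ‖gradient g x - gradient g w‖ * ‖gradient g x‖ :=
            real_inner_le_norm _ _
        _ ≤ c * ‖gradient g x‖ * ‖gradient g x‖ := by
            apply mul_le_mul_of_nonneg_right hnorm (norm_nonneg _)
    rw [hB]
    nlinarith [sq_nonneg ‖gradient g x‖]
  have hkey := lipschitz_sub_le_of_ae_deriv_le hφlip hae
  have h0 : φ 0 = g x := by simp [hφ]
  have h1 : φ 1 = g x' := by simp [hφ, hv]
  rw [h0, h1] at hkey
  exact hkey
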